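/- Let G be a finite simple graph on a vertex set V with n = |V| ≥ 2, let e₀ = {x,y} be an edge of G, let G' = G − e₀ be the graph with e₀ deleted, and let α : V → V → ℝ be antisymmetric. For the magnetic combinatorial Laplacians (vertex weight 1, edge weight the adjacency indicator) of G and G' (with the same α): (i) λ_k(G', α) ≤ λ_k(G, α) for all 1 ≤ k ≤ n; (ii) λ_k(G, α) ≤ λ_{k+1}(G', α) for all 1 ≤ k ≤ n − 1; and (iii) there exists 1 ≤ k ≤ n with λ_k(G', α) < λ_k(G, α). -/

import Mathlib

/-!
Deleting the edge `{x, y}` removes from the Laplacian exactly the rank-one positive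
semidefinite matrix `u uᴴ` with `u = e_x - exp(i α y x) e_y`. For a rank-one positive
perturbation `S = T + u uᴴ` of a self-adjoint `T`, the Courant–Fischer argument gives
`λ_k(T) ≤ λ_k(S) ≤ λ_{k+1}(T)`: the span of `k + 1` eigenvectors of one operator always meets
the orthogonal complement of `k` eigenvectors of the other (together with `u` for the upper
bound), and on such a vector the Rayleigh quotients compare. The inequalities cannot all be
equalities, since the traces differ by `‖u‖² = 2`.
-/

/-- The magnetic weighted Laplacian `Δ(w,m,α)` as a matrix acting on `ℂ^V`:
`(Δφ)(v) = (1/m v) · Σ_u w v u · (φ(v) − exp(i·α v u)·φ(u))`. -/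
noncomputable def magLap {V : Type} [Fintype V] [DecidableEq V]
    (w : V → V → ℝ) (m : V → ℝ) (α : V → V → ℝ) : Matrix V V ℂ :=
  fun v u => (if v = u then (((∑ u', w v u') / m v : ℝ) : ℂ) else 0)
    - ((w v u / m v : ℝ) : ℂ) * Complex.exp (Complex.I * (α v u : ℝ))

open scoped Classical

/-- The magnetic combinatorial Laplacian of a simple graph: vertex weight `1`,
edge weight the adjacency indicator. -/
noncomputable def combLap {V : Type} [Fintype V] [DecidableEq V]
    (G : SimpleGraph V) (α : V → V → ℝ) : Matrix V V ℂ :=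
  magLap (fun v u => if G.Adj v u then 1 else 0) (fun _ => 1) α

/-- The eigenvalues (with multiplicity, nondecreasing) of a matrix with real
spectrum: real parts of the roots of the characteristic polynomial, sorted;
`lamk A k` is the `(k+1)`-st smallest (0-based index). -/
noncomputable def lamk {V : Type} [Fintype V] [DecidableEq V] (A : Matrix V V ℂ) (k : ℕ) : ℝ :=
  ((A.charpoly.roots.map Complex.re).sort (· ≤ ·)).getD k 0

open Module InnerProductSpace

section InnerProductSpace

variable {𝕜 E : Type*} [RCLike 𝕜] [NormedAddCommGroup E] [InnerProductSpace 𝕜 E]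

local notation "⟪" x ", " y "⟫" => inner 𝕜 x y

theorem Submodule.exists_mem_orthogonal_ne_zero_of_finrank_lt [FiniteDimensional 𝕜 E]
    {K L : Submodule 𝕜 E} (h : finrank 𝕜 L < finrank 𝕜 K) : ∃ x ∈ K, x ∈ Lᗮ ∧ x ≠ 0 := by
  by_contra! hKL
  have := Submodule.finrank_add_finrank_le_of_disjoint (Submodule.disjoint_def.mpr hKL)
  have := L.finrank_add_finrank_orthogonal
  omega

theorem OrthonormalBasis.inner_eq_zero_of_mem_span_image {ι : Type*} [Fintype ι]
    (b : OrthonormalBasis ι 𝕜 E) {s : Set ι} {x : E} (hx : x ∈ Submodule.span 𝕜 (b '' s))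
    {j : ι} (hj : j ∉ s) : ⟪b j, x⟫ = 0 := by
  have hspan : Submodule.span 𝕜 (b '' s) ≤ (𝕜 ∙ b j)ᗮ := by
    rw [Submodule.span_le]
    rintro _ ⟨k, hk, rfl⟩
    exact Submodule.mem_orthogonal_singleton_iff_inner_right.mpr
      (b.orthonormal.2 fun h => hj (h ▸ hk))
  exact Submodule.mem_orthogonal_singleton_iff_inner_right.mp (hspan hx)

theorem OrthonormalBasis.finrank_span_image {ι : Type*} [Fintype ι] [DecidableEq E]
    (b : OrthonormalBasis ι 𝕜 E) (s : Finset ι) :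
    finrank 𝕜 (Submodule.span 𝕜 (b '' s)) = s.card := by
  have hb := b.orthonormal.linearIndependent
  rw [← Finset.coe_image, finrank_span_finset_eq_card,
    Finset.card_image_of_injective _ hb.injective]
  exact hb.linearIndepOn_id.mono (by simp)

theorem re_inner_apply_self_eq_add_norm_sq {S T : E →ₗ[𝕜] E} {u : E}
    (hST : ∀ x, S x = T x + ⟪u, x⟫ • u) (x : E) :
    RCLike.re ⟪S x, x⟫ = RCLike.re ⟪T x, x⟫ + ‖⟪u, x⟫‖ ^ 2 := by
  rw [hST, inner_add_left, inner_smul_left, RCLike.conj_mul, map_add]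
  norm_cast

namespace LinearMap.IsSymmetric

variable [FiniteDimensional 𝕜 E] {S T : E →ₗ[𝕜] E} {n : ℕ}
  (hS : S.IsSymmetric) (hT : T.IsSymmetric) (hn : finrank 𝕜 E = n)

include hT

theorem re_inner_apply_self_eq_sum (x : E) :
    RCLike.re ⟪T x, x⟫
      = ∑ i, hT.eigenvalues hn i * ‖⟪hT.eigenvectorBasis hn i, x⟫‖ ^ 2 := by
  rw [← (hT.eigenvectorBasis hn).sum_inner_mul_inner, map_sum]
  refine Finset.sum_congr rfl fun i _ => ?_
  rw [hT, hT.apply_eigenvectorBasis, inner_smul_right, ← inner_conj_symm, mul_assoc,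
    RCLike.conj_mul]
  norm_cast

theorem eigenvalues_mul_norm_sq_le_re_inner {i : Fin n} {x : E}
    (hx : ∀ j, i < j → ⟪hT.eigenvectorBasis hn j, x⟫ = 0) :
    hT.eigenvalues hn i * ‖x‖ ^ 2 ≤ RCLike.re ⟪T x, x⟫ := by
  rw [hT.re_inner_apply_self_eq_sum hn, ← (hT.eigenvectorBasis hn).sum_sq_norm_inner_right,
    Finset.mul_sum]
  refine Finset.sum_le_sum fun j _ => ?_
  rcases le_or_gt j i with hji | hij
  · exact mul_le_mul_of_nonneg_right (hT.eigenvalues_antitone hn hji) (by positivity)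
  · simp [hx j hij]

theorem re_inner_le_eigenvalues_mul_norm_sq {i : Fin n} {x : E}
    (hx : ∀ j < i, ⟪hT.eigenvectorBasis hn j, x⟫ = 0) :
    RCLike.re ⟪T x, x⟫ ≤ hT.eigenvalues hn i * ‖x‖ ^ 2 := by
  rw [hT.re_inner_apply_self_eq_sum hn, ← (hT.eigenvectorBasis hn).sum_sq_norm_inner_right,
    Finset.mul_sum]
  refine Finset.sum_le_sum fun j _ => ?_
  rcases lt_or_ge j i with hji | hij
  · simp [hx j hji]
  · exact mul_le_mul_of_nonneg_right (hT.eigenvalues_antitone hn hij) (by positivity)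

theorem exists_mem_orthogonal_eigenvalues_mul_norm_sq_le {L : Submodule 𝕜 E} {i : Fin n}
    (hL : finrank 𝕜 L ≤ i) :
    ∃ x ∈ Lᗮ, x ≠ 0 ∧ hT.eigenvalues hn i * ‖x‖ ^ 2 ≤ RCLike.re ⟪T x, x⟫ := by
  classical
  obtain ⟨x, hxK, hxL, hx0⟩ := Submodule.exists_mem_orthogonal_ne_zero_of_finrank_lt
    (K := Submodule.span 𝕜 (hT.eigenvectorBasis hn '' ↑(Finset.Iic i))) (L := L)
    (by rw [OrthonormalBasis.finrank_span_image, Fin.card_Iic]; omega)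
  refine ⟨x, hxL, hx0, hT.eigenvalues_mul_norm_sq_le_re_inner hn fun j hij => ?_⟩
  exact OrthonormalBasis.inner_eq_zero_of_mem_span_image _ hxK (by simpa using hij)

include hS

theorem eigenvalues_le_of_eq_add_rankOne {u : E} (hST : ∀ x, S x = T x + ⟪u, x⟫ • u)
    (i : Fin n) : hT.eigenvalues hn i ≤ hS.eigenvalues hn i := by
  classical
  set L := Submodule.span 𝕜 (((Finset.Iio i).image (hS.eigenvectorBasis hn) : Finset E) : Set E)
  have hL : finrank 𝕜 L ≤ i :=
    (finrank_span_finset_le_card _).trans (Finset.card_image_le.trans (Fin.card_Iio i).le)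
  obtain ⟨x, hxL, hx0, hTx⟩ := hT.exists_mem_orthogonal_eigenvalues_mul_norm_sq_le hn hL
  have hSx := hS.re_inner_le_eigenvalues_mul_norm_sq hn (i := i) fun j hj =>
    Submodule.inner_right_of_mem_orthogonal
      (Submodule.subset_span (by simpa using ⟨j, hj, rfl⟩)) hxL
  refine le_of_mul_le_mul_right ?_ (by positivity : 0 < ‖x‖ ^ 2)
  calc hT.eigenvalues hn i * ‖x‖ ^ 2
      ≤ RCLike.re ⟪T x, x⟫ := hTx
    _ ≤ RCLike.re ⟪S x, x⟫ := by
      rw [re_inner_apply_self_eq_add_norm_sq hST]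
      exact le_add_of_nonneg_right (by positivity)
    _ ≤ hS.eigenvalues hn i * ‖x‖ ^ 2 := hSx

theorem eigenvalues_le_of_eq_add_rankOne_of_lt {u : E} (hST : ∀ x, S x = T x + ⟪u, x⟫ • u)
    {i j : Fin n} (hij : i < j) : hS.eigenvalues hn j ≤ hT.eigenvalues hn i := by
  classical
  set L := Submodule.span 𝕜
    ((insert u ((Finset.Iio i).image (hT.eigenvectorBasis hn)) : Finset E) : Set E)
  have hL : finrank 𝕜 L ≤ j := by
    refine (finrank_span_finset_le_card _).trans ((Finset.card_insert_le _ _).trans ?_)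
    have := (Finset.card_image_le (f := hT.eigenvectorBasis hn)).trans (Fin.card_Iio i).le
    omega
  obtain ⟨x, hxL, hx0, hSx⟩ := hS.exists_mem_orthogonal_eigenvalues_mul_norm_sq_le hn hL
  have hxu : ⟪u, x⟫ = 0 :=
    Submodule.inner_right_of_mem_orthogonal (Submodule.subset_span (by simp)) hxL
  have hTx := hT.re_inner_le_eigenvalues_mul_norm_sq hn (i := i) fun k hk =>
    Submodule.inner_right_of_mem_orthogonal
      (Submodule.subset_span (by simpa using Or.inr ⟨k, hk, rfl⟩)) hxL
  refine le_of_mul_le_mul_right ?_ (by positivity : 0 < ‖x‖ ^ 2)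
  calc hS.eigenvalues hn j * ‖x‖ ^ 2
      ≤ RCLike.re ⟪S x, x⟫ := hSx
    _ = RCLike.re ⟪T x, x⟫ := by rw [re_inner_apply_self_eq_add_norm_sq hST, hxu]; simp
    _ ≤ hT.eigenvalues hn i * ‖x‖ ^ 2 := hTx

end LinearMap.IsSymmetric

end InnerProductSpace

theorem Multiset.sort_le_eq_reverse_sort_ge {α : Type*} [LinearOrder α] (s : Multiset α) :
    s.sort (· ≤ ·) = (s.sort (· ≥ ·)).reverse :=
  List.Perm.eq_reverse_of_sortedLE_of_sortedGE
    (by rw [← Multiset.coe_eq_coe, Multiset.sort_eq, Multiset.sort_eq])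
    (List.sortedLE_iff_pairwise.mpr (Multiset.pairwise_sort _ _))
    (List.sortedGE_iff_pairwise.mpr (Multiset.pairwise_sort _ _))

namespace Matrix

theorem toEuclideanLin_add_vecMulVec_star_apply {𝕜 n : Type*} [RCLike 𝕜] [Fintype n]
    [DecidableEq n] (A : Matrix n n 𝕜) (u : n → 𝕜) (x : EuclideanSpace 𝕜 n) :
    toEuclideanLin (A + vecMulVec u (star u)) x
      = toEuclideanLin A x + inner 𝕜 (WithLp.toLp 2 u) x • WithLp.toLp 2 u := by
  ext i
  simp [toLpLin_apply, vecMulVec_mulVec, EuclideanSpace.inner_eq_star_dotProduct,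
    dotProduct_comm]

variable {V : Type} [Fintype V] [DecidableEq V] {A : Matrix V V ℂ}

theorem IsHermitian.lamk_eq_eigenvalues₀_rev (hA : A.IsHermitian) {k : ℕ}
    (hk : k < Fintype.card V) : lamk A k = hA.eigenvalues₀ (Fin.rev ⟨k, hk⟩) := by
  rw [lamk, Multiset.sort_le_eq_reverse_sort_ge,
    show Complex.re = (RCLike.re : ℂ → ℝ) from rfl, hA.sort_roots_charpoly_eq_eigenvalues₀,
    List.getD_eq_getElem _ _ (by simpa), List.getElem_reverse, List.getElem_ofFn]
  congr 1
  ext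
  simp only [List.length_ofFn, Fin.val_rev]
  omega

theorem IsHermitian.sum_lamk (hA : A.IsHermitian) :
    ∑ k ∈ Finset.range (Fintype.card V), lamk A k = A.trace.re := by
  rw [← Fin.sum_univ_eq_sum_range, hA.trace_eq_sum_eigenvalues]
  simp only [fun k : Fin _ => hA.lamk_eq_eigenvalues₀_rev k.isLt, Complex.re_sum]
  exact (Equiv.sum_comp Fin.revPerm hA.eigenvalues₀).trans
    (Equiv.sum_comp (Fintype.equivOfCardEq (Fintype.card_fin _)).symm hA.eigenvalues₀).symm

open scoped ComplexOrder

theorem IsHermitian.lamk_le_lamk_add_vecMulVec (hA : A.IsHermitian) (u : V → ℂ) {k : ℕ}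
    (hk : k < Fintype.card V) : lamk A k ≤ lamk (A + vecMulVec u (star u)) k := by
  have hB := hA.add (posSemidef_vecMulVec_self_star u).isHermitian
  rw [hA.lamk_eq_eigenvalues₀_rev hk, hB.lamk_eq_eigenvalues₀_rev hk]
  exact LinearMap.IsSymmetric.eigenvalues_le_of_eq_add_rankOne _ _ _
    (toEuclideanLin_add_vecMulVec_star_apply A u) _

theorem IsHermitian.lamk_add_vecMulVec_le_lamk_succ (hA : A.IsHermitian) (u : V → ℂ) {k : ℕ}
    (hk : k + 1 < Fintype.card V) : lamk (A + vecMulVec u (star u)) k ≤ lamk A (k + 1) := by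
  have hB := hA.add (posSemidef_vecMulVec_self_star u).isHermitian
  rw [hA.lamk_eq_eigenvalues₀_rev hk, hB.lamk_eq_eigenvalues₀_rev (by omega : k < _)]
  exact LinearMap.IsSymmetric.eigenvalues_le_of_eq_add_rankOne_of_lt _ _ _
    (toEuclideanLin_add_vecMulVec_star_apply A u) (Fin.rev_lt_rev.mpr (by simp))

theorem IsHermitian.exists_lamk_lt_lamk_add_vecMulVec (hA : A.IsHermitian) {u : V → ℂ}
    (hu : u ≠ 0) : ∃ k < Fintype.card V, lamk A k < lamk (A + vecMulVec u (star u)) k := by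
  have hB := hA.add (posSemidef_vecMulVec_self_star u).isHermitian
  have hsum : ∑ k ∈ Finset.range (Fintype.card V), lamk A k
      < ∑ k ∈ Finset.range (Fintype.card V), lamk (A + vecMulVec u (star u)) k := by
    rw [hA.sum_lamk, hB.sum_lamk, trace_add, trace_vecMulVec, Complex.add_re]
    have := (Complex.pos_iff.mp (dotProduct_self_star_pos_iff.mpr hu)).1
    linarith
  simpa using Finset.exists_lt_of_sum_lt hsum

end Matrix

open Matrix

section Graph

variable {V : Type} [Fintype V] [DecidableEq V]

theorem magLap_add (w₁ w₂ : V → V → ℝ) (m : V → ℝ) (α : V → V → ℝ) :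
    magLap (w₁ + w₂) m α = magLap w₁ m α + magLap w₂ m α := by
  ext v u
  simp only [magLap, Pi.add_apply, Finset.sum_add_distrib, add_div, Matrix.add_apply]
  split_ifs <;> push_cast <;> ring

omit [Fintype V] [DecidableEq V] in
theorem star_cexp_I_mul {α : V → V → ℝ} (hα : ∀ v u, α v u = - α u v) (x y : V) :
    star (Complex.exp (Complex.I * α y x)) = Complex.exp (Complex.I * α x y) := by
  rw [Complex.star_def, ← Complex.exp_conj, map_mul, Complex.conj_I, Complex.conj_ofReal, hα y x]
  push_cast
  ring_nf

noncomputable def edgeVec (α : V → V → ℝ) (x y : V) : V → ℂ :=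
  Pi.single x 1 - Pi.single y (Complex.exp (Complex.I * α y x))

omit [Fintype V] in
theorem edgeVec_ne_zero (α : V → V → ℝ) {x y : V} (hxy : x ≠ y) : edgeVec α x y ≠ 0 :=
  Function.ne_iff.mpr ⟨x, by simp [edgeVec, hxy]⟩

theorem magLap_indicator_edge_eq_vecMulVec {α : V → V → ℝ} (hα : ∀ v u, α v u = - α u v)
    {x y : V} (hxy : x ≠ y) :
    magLap (fun v u => if s(v, u) = s(x, y) then 1 else 0) (fun _ => 1) α
      = vecMulVec (edgeVec α x y) (star (edgeVec α x y)) := by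
  ext v u
  have hdeg : ∑ u', (if s(v, u') = s(x, y) then (1 : ℝ) else 0)
      = (if v = x then 1 else 0) + (if v = y then 1 else 0) := by
    rcases eq_or_ne v x with rfl | hvx
    · simp [hxy]
    rcases eq_or_ne v y with rfl | hvy
    · simp [hvx, Sym2.eq_swap (a := x)]
    · simp [hvx, hvy]
  have hconj := star_cexp_I_mul hα x y
  have hunit : Complex.exp (Complex.I * α y x) * Complex.exp (Complex.I * α x y) = 1 := by
    rw [← Complex.exp_add, hα y x]
    push_cast
    ring_nf
    exact Complex.exp_zero
  simp only [magLap, vecMulVec_apply, edgeVec, div_one, Pi.sub_apply, Pi.star_apply]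
  rw [hdeg]
  rcases eq_or_ne v u with rfl | hvu
  · by_cases hvx : v = x
    · subst hvx; simp [hxy]
    by_cases hvy : v = y
    · subst hvy; simp [hvx, hconj, hunit]
    simp [hvx, hvy]
  · by_cases hvx : v = x
    · subst hvx
      by_cases huy : u = y
      · subst huy; simp [hvu, hvu.symm, hconj]
      simp [hvu, hvu.symm, huy]
    by_cases hvy : v = y
    · subst hvy
      by_cases hux : u = x
      · subst hux; simp [hvu, hvu.symm, Sym2.eq_swap]
      simp [hvu, hvu.symm, hux, hvx]
    simp [hvx, hvy]

omit [Fintype V] in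
theorem adj_indicator_eq_deleteEdges_add {G : SimpleGraph V} {x y : V} (hxy : G.Adj x y)
    (v u : V) :
    (if G.Adj v u then (1 : ℝ) else 0)
      = (if (G.deleteEdges {s(x, y)}).Adj v u then 1 else 0)
        + if s(v, u) = s(x, y) then 1 else 0 := by
  by_cases h : s(v, u) = s(x, y)
  · have hvu : G.Adj v u := by rwa [← SimpleGraph.mem_edgeSet, h]
    simp [hvu, h]
  · simp [h]

theorem combLap_eq_deleteEdges_add (G : SimpleGraph V) {x y : V} (hxy : G.Adj x y)
    {α : V → V → ℝ} (hα : ∀ v u, α v u = - α u v) :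
    combLap G α = combLap (G.deleteEdges {s(x, y)}) α
      + vecMulVec (edgeVec α x y) (star (edgeVec α x y)) := by
  rw [← magLap_indicator_edge_eq_vecMulVec hα (G.ne_of_adj hxy), combLap, combLap,
    ← magLap_add]
  congr
  ext v u
  simp only [Pi.add_apply]
  -- `combLap` decides adjacency classically, hence `convert` rather than `exact`.
  convert adj_indicator_eq_deleteEdges_add hxy v u

theorem combLap_isHermitian (G : SimpleGraph V) {α : V → V → ℝ}
    (hα : ∀ v u, α v u = - α u v) : (combLap G α).IsHermitian := by
  ext v u
  rcases eq_or_ne u v with rfl | huv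
  · simp [combLap, magLap]
  · simp [combLap, magLap, huv, huv.symm, G.adj_comm, star_cexp_I_mul hα]

end Graph

theorem stmt11_general {V : Type} [Fintype V] [DecidableEq V]
    (G : SimpleGraph V) (x y : V) (hxy : G.Adj x y)
    (α : V → V → ℝ) (hα : ∀ v u, α v u = - α u v) :
    (∀ k : ℕ, 1 ≤ k → k ≤ Fintype.card V →
      lamk (combLap (G.deleteEdges {s(x, y)}) α) (k - 1) ≤ lamk (combLap G α) (k - 1))
    ∧ (∀ k : ℕ, 1 ≤ k → k ≤ Fintype.card V - 1 →
      lamk (combLap G α) (k - 1) ≤ lamk (combLap (G.deleteEdges {s(x, y)}) α) k)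
    ∧ (∃ k : ℕ, 1 ≤ k ∧ k ≤ Fintype.card V ∧
      lamk (combLap (G.deleteEdges {s(x, y)}) α) (k - 1) < lamk (combLap G α) (k - 1)) := by
  have hA := combLap_isHermitian (G.deleteEdges {s(x, y)}) hα
  rw [combLap_eq_deleteEdges_add G hxy hα]
  refine ⟨fun k _ hk => hA.lamk_le_lamk_add_vecMulVec _ (by omega), fun k hk₁ hk => ?_, ?_⟩
  · have := hA.lamk_add_vecMulVec_le_lamk_succ (edgeVec α x y) (k := k - 1) (by omega)
    rwa [Nat.sub_add_cancel hk₁] at this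
  · obtain ⟨k, hk, hlt⟩ :=
      hA.exists_lamk_lt_lamk_add_vecMulVec (edgeVec_ne_zero α (G.ne_of_adj hxy))
    exact ⟨k + 1, by omega, by omega, by simpa using hlt⟩

/-- deleting one edge from a graph with combinatorial weights:
(i) `λ_k(G') ≤ λ_k(G)`; (ii) `λ_k(G) ≤ λ_{k+1}(G')`; (iii) strict inequality
`λ_k(G') < λ_k(G)` for some `k`. -/
theorem stmt11 {V : Type} [Fintype V] [DecidableEq V] [Nonempty V]
    (hn : 2 ≤ Fintype.card V)
    (G : SimpleGraph V) (x y : V) (hxy : G.Adj x y)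
    (α : V → V → ℝ) (hα : ∀ v u, α v u = - α u v) :
    (∀ k : ℕ, 1 ≤ k → k ≤ Fintype.card V →
      lamk (combLap (G.deleteEdges {s(x, y)}) α) (k - 1) ≤ lamk (combLap G α) (k - 1))
    ∧ (∀ k : ℕ, 1 ≤ k → k ≤ Fintype.card V - 1 →
      lamk (combLap G α) (k - 1) ≤ lamk (combLap (G.deleteEdges {s(x, y)}) α) k)
    ∧ (∃ k : ℕ, 1 ≤ k ∧ k ≤ Fintype.card V ∧
      lamk (combLap (G.deleteEdges {s(x, y)}) α) (k - 1) < lamk (combLap G α) (k - 1)) :=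
  stmt11_general G x y hxy α hα
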